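/- Assume h(u) ≥ 0 for all u ∈ [0,1] and H(1)^{p'} ≤ k(p) ∫₀¹ D(u)^{p'−1} g(u) du. Let y₀ : [0,1] → ℝ be continuous, differentiable on (0,1), with y₀(1) = 0 and y₀'(u) = p'·[h(u)·(max(y₀(u),0))^{1/p} − D(u)^{p'−1} g(u)] for all u ∈ (0,1). Then y₀(θ)^{1/p'} > H(θ). -/

import Mathlib

open Set MeasureTheory Filter

/-- The conjugate exponent `p' = p/(p-1)`. -/
noncomputable def pconj (p : ℝ) : ℝ := p / (p - 1)

/-- The constant `k(p)` from the paper. -/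
noncomputable def kfun (p : ℝ) : ℝ :=
  if p < 2 then 1 / (2 ^ (pconj p - 1) - 1)
  else if p = 2 then 1
  else pconj p / (pconj p - 1 +
    (1 + pconj p * (pconj p - 1) ^ ((1 : ℝ) / (pconj p - 2)) +
      (pconj p - 1) ^ (pconj p / (pconj p - 2))) /
    (1 + (pconj p - 1) ^ ((1 : ℝ) / (pconj p - 2))) ^ pconj p)

/-- Standing assumptions on the data `p, θ, D, H, h, g` (combustion setting). -/
structure CombSetup (p θ : ℝ) (D H h g : ℝ → ℝ) : Prop where
  hp : 1 < p
  hθ0 : 0 < θ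
  hθ1 : θ < 1
  hD : ContDiffOn ℝ 1 D (Ioo 0 1)
  hDpos : ∀ v ∈ Ioo (0 : ℝ) 1, 0 < D v
  hH : ContDiffOn ℝ 1 H (Icc 0 1)
  hH0 : H 0 = 0
  hh : ContinuousOn h (Icc 0 1)
  hHd : ∀ v ∈ Icc (0 : ℝ) 1, HasDerivWithinAt H (h v) (Icc 0 1) v
  hgc : ContinuousOn g (Icc 0 1)
  hg0 : ∀ v ∈ Icc (0 : ℝ) θ, g v = 0
  hgpos : ∀ v ∈ Ioo θ 1, 0 < g v
  hg1 : g 1 = 0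
  hInt : IntegrableOn (fun v => D v ^ (pconj p - 1) * g v) (Ioo 0 1)

/-- The diffusive flux `ξ ↦ D(u(ξ)) |u'(ξ)|^{p-2} u'(ξ)`. -/
noncomputable def flux (p : ℝ) (D u : ℝ → ℝ) : ℝ → ℝ :=
  fun ξ => D (u ξ) * (|deriv u ξ| ^ (p - 2) * deriv u ξ)

/-- Solution of the traveling-wave problem with speed `c`. -/
structure IsTWSol (p c : ℝ) (D h g : ℝ → ℝ) (u : ℝ → ℝ) : Prop where
  cont : Continuous u
  mem : ∀ ξ, u ξ ∈ Icc (0 : ℝ) 1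
  smooth : ContDiffOn ℝ 1 u {ξ | u ξ ∈ Ioo (0 : ℝ) 1}
  eqn : ∀ ξ ∈ {ξ | u ξ ∈ Ioo (0 : ℝ) 1},
    HasDerivAt (flux p D u) (-(c + h (u ξ)) * deriv u ξ - g (u ξ)) ξ
  flux_cont : Continuous (fun ξ => if u ξ ∈ Ioo (0 : ℝ) 1 then flux p D u ξ else 0)
  flux_to0 : ∀ ε > 0, ∃ δ > 0, ∀ ξ, u ξ ∈ Ioo (0 : ℝ) 1 → u ξ < δ → |flux p D u ξ| < ε
  flux_to1 : ∀ ε > 0, ∃ δ > 0, ∀ ξ, u ξ ∈ Ioo (0 : ℝ) 1 → 1 - δ < u ξ → |flux p D u ξ| < ε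
  lim_bot : Tendsto u atBot (nhds 1)
  lim_top : Tendsto u atTop (nhds 0)

/-- Positive solution of the first-order problem with parameter `c`. -/
structure IsFOSol (p c : ℝ) (D h g : ℝ → ℝ) (y : ℝ → ℝ) : Prop where
  cont : ContinuousOn y (Icc 0 1)
  eqn : ∀ v ∈ Ioo (0 : ℝ) 1, HasDerivAt y
    (pconj p * ((c + h v) * (max (y v) 0) ^ (1 / p) - D v ^ (pconj p - 1) * g v)) v
  y0 : y 0 = 0
  y1 : y 1 = 0
  pos : ∀ v ∈ Ioo (0 : ℝ) 1, 0 < y v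

/-! The proof is by contradiction. Suppose `y₀(θ)^{1/p'} ≤ H(θ)`. On `(θ,1)` the source term
`f = D^{p'-1} g` is positive, so `y₀` cannot touch `0` there without decreasing: since `y₀(1) = 0`,
`y₀ > 0` on `(θ,1)`. Along the equation, `(y₀^{1/p'})' = h - f y₀^{1/p'-1} ≤ H'`, hence
`y₀^{1/p'} ≤ H` on `[θ,1]` and therefore `h y₀^{1/p} ≤ h H^{p'-1}`. The function `H^{p'} - y₀` then
grows at least like `p' ∫ f`, which yields `p' ∫₀¹ f ≤ H(1)^{p'}`. This contradicts the hypothesis,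
because `k(p) < p'`. -/

lemma one_lt_pconj {p : ℝ} (hp : 1 < p) : 1 < pconj p := by
  rw [pconj, lt_div_iff₀ (by linarith)]
  linarith

lemma one_div_add_one_div_pconj {p : ℝ} (hp : 1 < p) : 1 / p + 1 / pconj p = 1 := by
  have : p - 1 ≠ 0 := by linarith
  rw [pconj]
  field_simp
  ring

lemma one_add_rpow_le {q s : ℝ} (hq1 : 1 ≤ q) (hq2 : q ≤ 2) (hs : 0 ≤ s) :
    (1 + s) ^ q ≤ 1 + q * s + s ^ q := by
  set F : ℝ → ℝ := fun t => 1 + q * t + t ^ q - (1 + t) ^ q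
  have hF : MonotoneOn F (Ici 0) := by
    have hq0 : (0 : ℝ) ≤ q := by linarith
    refine monotoneOn_of_hasDerivWithinAt_nonneg (convex_Ici 0)
      (f' := fun x => q + q * x ^ (q - 1) - q * (1 + x) ^ (q - 1)) ?_ ?_ ?_
    · exact ((continuousOn_const.add (continuousOn_const.mul continuousOn_id)).add
        (continuousOn_id.rpow_const fun _ _ => Or.inr hq0)).sub
        ((continuousOn_const.add continuousOn_id).rpow_const fun _ _ => Or.inr hq0)
    · rw [interior_Ici]
      intro x hx
      have hx' : (0 : ℝ) < 1 + x := by linarith [mem_Ioi.1 hx]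
      have hlin : HasDerivAt (fun t : ℝ => 1 + q * t) q x := by
        simpa using ((hasDerivAt_id x).const_mul q).const_add 1
      have hpow : HasDerivAt (fun t : ℝ => (1 + t) ^ q) (q * (1 + x) ^ (q - 1)) x := by
        simpa using ((hasDerivAt_id x).const_add 1).rpow_const (p := q) (Or.inl hx'.ne')
      exact ((hlin.add (Real.hasDerivAt_rpow_const (Or.inl hx.ne'))).sub hpow).hasDerivWithinAt
    · rw [interior_Ici]
      intro x hx
      have hsub : (1 + x) ^ (q - 1) ≤ 1 + x ^ (q - 1) := by
        simpa using Real.rpow_add_le_add_rpow zero_le_one (le_of_lt hx) (by linarith) (by linarith)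
      nlinarith
  have := hF self_mem_Ici hs hs
  simp only [F, Real.zero_rpow (by linarith : q ≠ 0), Real.one_rpow, add_zero, mul_zero] at this
  linarith

lemma kfun_lt_pconj {p : ℝ} (hp : 1 < p) : kfun p < pconj p := by
  have hq1 : 1 < pconj p := one_lt_pconj hp
  rcases lt_trichotomy p 2 with hp2 | rfl | hp2
  · have hq2 : 2 < pconj p := by rw [pconj, lt_div_iff₀ (by linarith)]; linarith
    have h21 : (2 : ℝ) < 2 ^ (pconj p - 1) := by
      simpa using Real.rpow_lt_rpow_of_exponent_lt one_lt_two (by linarith : (1 : ℝ) < pconj p - 1)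
    rw [kfun, if_pos hp2]
    have : 1 / ((2 : ℝ) ^ (pconj p - 1) - 1) < 1 := by rw [div_lt_one (by linarith)]; linarith
    linarith
  · simpa [kfun] using hq1
  · have hq2 : pconj p < 2 := by rw [pconj, div_lt_iff₀ (by linarith)]; linarith
    rw [kfun, if_neg (by linarith), if_neg (by linarith)]
    set q := pconj p
    set s : ℝ := (q - 1) ^ ((1 : ℝ) / (q - 2))
    have hs : 0 < s := Real.rpow_pos_of_pos (by linarith) _
    have hsq : (q - 1) ^ (q / (q - 2)) = s ^ q := by
      rw [← Real.rpow_mul (by linarith)]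
      congr 1
      ring
    have hfrac : 1 ≤ (1 + q * s + s ^ q) / (1 + s) ^ q :=
      (one_le_div (by positivity)).2 (one_add_rpow_le hq1.le hq2.le hs.le)
    rw [hsq]
    exact div_lt_self (by linarith) (by linarith)

lemma nonneg_of_pos_on_Ioo {y : ℝ → ℝ} {a b : ℝ} (hab : a < b) (hy : ContinuousOn y (Icc a b))
    (hpos : ∀ v ∈ Ioo a b, 0 < y v) : ∀ v ∈ Icc a b, 0 ≤ y v := by
  have hclosed : IsClosed (Icc a b ∩ y ⁻¹' Ici 0) :=
    hy.preimage_isClosed_of_isClosed isClosed_Icc isClosed_Ici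
  have hsub := hclosed.closure_subset_iff.2 fun v hv => ⟨Ioo_subset_Icc_self hv, (hpos v hv).le⟩
  rw [closure_Ioo hab.ne] at hsub
  exact fun v hv => (hsub hv).2

lemma pos_of_hasDerivAt_neg_of_nonpos {y y' : ℝ → ℝ} {a b : ℝ}
    (hy : ContinuousOn y (Icc a b)) (hyb : y b = 0)
    (hderiv : ∀ v ∈ Ioo a b, HasDerivAt y (y' v) v)
    (hneg : ∀ v ∈ Ioo a b, y v ≤ 0 → y' v < 0) : ∀ v ∈ Ioo a b, 0 < y v := by
  intro c hc
  by_contra! hyc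
  have hIco : Ico c b ⊆ Ioo a b := fun v hv => ⟨hc.1.trans_le hv.1, hv.2⟩
  have hcont : ContinuousOn y (Icc c b) := hy.mono (Icc_subset_Icc_left hc.1.le)
  have hnonpos : ∀ v ∈ Icc c b, y v ≤ 0 :=
    image_le_of_deriv_right_lt_deriv_boundary' hcont
      (fun v hv => (hderiv v (hIco hv)).hasDerivWithinAt) hyc continuousOn_const
      (fun _ _ => hasDerivWithinAt_const _ _ 0) (fun v hv hv0 => hneg v (hIco hv) hv0.le)
  have hanti : StrictAntiOn y (Icc c b) := by
    refine strictAntiOn_of_hasDerivWithinAt_neg (convex_Icc c b) hcont (f' := y') ?_ ?_ <;>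
      rw [interior_Icc] <;> intro v hv
    · exact (hderiv v (hIco (Ioo_subset_Ico_self hv))).hasDerivWithinAt
    · exact hneg v (hIco (Ioo_subset_Ico_self hv)) (hnonpos v (Ioo_subset_Icc_self hv))
  have := hanti (left_mem_Icc.2 hc.2.le) (right_mem_Icc.2 hc.2.le) hc.2
  linarith

lemma setIntegral_Ioo_eq_intervalIntegral_of_eq_zero {f : ℝ → ℝ} {a b c : ℝ} (hac : a ≤ c)
    (hcb : c ≤ b) (hf : ∀ v ∈ Ioc a c, f v = 0) : ∫ v in Ioo a b, f v = ∫ v in c..b, f v := by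
  rw [intervalIntegral.integral_of_le hcb, integral_Ioc_eq_integral_Ioo]
  exact setIntegral_eq_of_subset_of_forall_sdiff_eq_zero measurableSet_Ioo
    (Ioo_subset_Ioo_left hac) fun v hv => hf v ⟨hv.1.1, not_lt.1 fun hcv => hv.2 ⟨hcv, hv.1.2⟩⟩

section FirstOrderProblem

variable {p a b : ℝ} {h f y H : ℝ → ℝ}

lemma pos_of_hasDerivAt_firstOrder (hp : 1 < p) (hf : ∀ v ∈ Ioo a b, 0 < f v)
    (hyc : ContinuousOn y (Icc a b)) (hyb : y b = 0)
    (hy : ∀ v ∈ Ioo a b, HasDerivAt y (pconj p * (h v * max (y v) 0 ^ (1 / p) - f v)) v) :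
    ∀ v ∈ Ioo a b, 0 < y v :=
  pos_of_hasDerivAt_neg_of_nonpos hyc hyb hy fun v hv hyv => by
    rw [max_eq_right hyv, Real.zero_rpow (one_div_ne_zero (by linarith)), mul_zero, zero_sub]
    exact mul_neg_of_pos_of_neg (by linarith [one_lt_pconj hp]) (neg_neg_of_pos (hf v hv))

lemma hasDerivAt_rpow_one_div_pconj (hp : 1 < p) {v : ℝ} (hyv : 0 < y v)
    (hy : HasDerivAt y (pconj p * (h v * max (y v) 0 ^ (1 / p) - f v)) v) :
    HasDerivAt (fun u => y u ^ (1 / pconj p)) (h v - f v * y v ^ (1 / pconj p - 1)) v := by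
  convert hy.rpow_const (p := 1 / pconj p) (Or.inl hyv.ne') using 1
  have hq : pconj p ≠ 0 := by linarith [one_lt_pconj hp]
  have hsplit : y v ^ (1 / p) * y v ^ (1 / pconj p - 1) = 1 := by
    have hexp : 1 / p + (1 / pconj p - 1) = 0 := by linarith [one_div_add_one_div_pconj hp]
    rw [← Real.rpow_add hyv, hexp, Real.rpow_zero]
  have hcancel : ∀ X : ℝ, pconj p * X * (1 / pconj p) = X := fun X => by field_simp
  rw [max_eq_left hyv.le, hcancel]
  linear_combination (-h v) * hsplit

lemma rpow_one_div_pconj_le (hp : 1 < p) (hf : ∀ v ∈ Ioo a b, 0 ≤ f v)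
    (hyc : ContinuousOn y (Icc a b)) (hypos : ∀ v ∈ Ioo a b, 0 < y v)
    (hy : ∀ v ∈ Ioo a b, HasDerivAt y (pconj p * (h v * max (y v) 0 ^ (1 / p) - f v)) v)
    (hHc : ContinuousOn H (Icc a b)) (hH : ∀ v ∈ Ioo a b, HasDerivAt H (h v) v)
    (ha : y a ^ (1 / pconj p) ≤ H a) : ∀ v ∈ Icc a b, y v ^ (1 / pconj p) ≤ H v := by
  have hanti : AntitoneOn (fun u => y u ^ (1 / pconj p) - H u) (Icc a b) := by
    refine antitoneOn_of_hasDerivWithinAt_nonpos (convex_Icc a b)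
      (f' := fun v => h v - f v * y v ^ (1 / pconj p - 1) - h v) ?_ ?_ ?_
    · have hexp : 0 ≤ 1 / pconj p := one_div_nonneg.2 (by linarith [one_lt_pconj hp])
      exact (hyc.rpow_const fun _ _ => Or.inr hexp).sub hHc
    · rw [interior_Icc]
      intro v hv
      exact ((hasDerivAt_rpow_one_div_pconj hp (hypos v hv) (hy v hv)).sub
        (hH v hv)).hasDerivWithinAt
    · rw [interior_Icc]
      intro v hv
      have := mul_nonneg (hf v hv) (Real.rpow_nonneg (hypos v hv).le (1 / pconj p - 1))
      linarith
  intro v hv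
  have := hanti (left_mem_Icc.2 (hv.1.trans hv.2)) hv hv.1
  simp only at this
  linarith

lemma pconj_mul_integral_le (hp : 1 < p) (hab : a ≤ b) (hh : ∀ v ∈ Ioo a b, 0 ≤ h v)
    (hfi : IntegrableOn f (Icc a b)) (hyc : ContinuousOn y (Icc a b))
    (hypos : ∀ v ∈ Ioo a b, 0 < y v)
    (hy : ∀ v ∈ Ioo a b, HasDerivAt y (pconj p * (h v * max (y v) 0 ^ (1 / p) - f v)) v)
    (hHc : ContinuousOn H (Icc a b)) (hH : ∀ v ∈ Ioo a b, HasDerivAt H (h v) v)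
    (hle : ∀ v ∈ Ioo a b, y v ^ (1 / pconj p) ≤ H v) :
    pconj p * ∫ v in a..b, f v ≤ (H b ^ pconj p - y b) - (H a ^ pconj p - y a) := by
  have hq := one_lt_pconj hp
  rw [← intervalIntegral.integral_const_mul]
  refine intervalIntegral.integral_le_sub_of_hasDeriv_right_of_le hab
    ((hHc.rpow_const fun _ _ => Or.inr (by linarith)).sub hyc)
    (fun v hv => (((hH v hv).rpow_const (Or.inr hq.le)).sub (hy v hv)).hasDerivWithinAt)
    (hfi.const_mul _) fun v hv => ?_
  have hpow : max (y v) 0 ^ (1 / p) ≤ H v ^ (pconj p - 1) := by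
    have hexp : 1 / pconj p * (pconj p - 1) = 1 / p := by
      rw [mul_sub, mul_one, one_div_mul_cancel (by linarith)]
      linarith [one_div_add_one_div_pconj hp]
    rw [max_eq_left (hypos v hv).le, ← hexp, Real.rpow_mul (hypos v hv).le]
    exact Real.rpow_le_rpow (Real.rpow_nonneg (hypos v hv).le _) (hle v hv) (by linarith)
  have := mul_nonneg (mul_nonneg (by linarith : (0 : ℝ) ≤ pconj p) (hh v hv)) (sub_nonneg.2 hpow)
  linarith

end FirstOrderProblem

/-- Lemma B.2, key inequality `y₀(θ)^{1/p'} > H(θ)`. -/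
theorem stmt16 (p θ : ℝ) (D H h g y₀ : ℝ → ℝ) (S : CombSetup p θ D H h g)
    (hh0 : ∀ v ∈ Icc (0 : ℝ) 1, 0 ≤ h v)
    (hcond : H 1 ^ pconj p ≤ kfun p * ∫ v in Ioo (0 : ℝ) 1, D v ^ (pconj p - 1) * g v)
    (hy₀c : ContinuousOn y₀ (Icc 0 1)) (hy₀1 : y₀ 1 = 0)
    (hy₀eq : ∀ v ∈ Ioo (0 : ℝ) 1, HasDerivAt y₀
      (pconj p * (h v * (max (y₀ v) 0) ^ (1 / p) - D v ^ (pconj p - 1) * g v)) v) :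
    H θ < y₀ θ ^ (1 / pconj p) := by
  obtain ⟨hp, hθ0, hθ1, -, hDpos, hH, -, -, hHd, -, hg0, hgpos, -, hInt⟩ := S
  set f : ℝ → ℝ := fun v => D v ^ (pconj p - 1) * g v
  have hsub : Ioo θ 1 ⊆ Ioo 0 1 := Ioo_subset_Ioo_left hθ0.le
  have hfpos : ∀ v ∈ Ioo θ 1, 0 < f v := fun v hv =>
    mul_pos (Real.rpow_pos_of_pos (hDpos v (hsub hv)) _) (hgpos v hv)
  have hfi : IntegrableOn f (Icc θ 1) := by
    rw [integrableOn_Icc_iff_integrableOn_Ioo]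
    exact hInt.mono_set hsub
  have hy : ∀ v ∈ Ioo θ 1, HasDerivAt y₀ (pconj p * (h v * max (y₀ v) 0 ^ (1 / p) - f v)) v :=
    fun v hv => hy₀eq v (hsub hv)
  have hHd' : ∀ v ∈ Ioo θ 1, HasDerivAt H (h v) v := fun v hv =>
    (hHd v (Ioo_subset_Icc_self (hsub hv))).hasDerivAt (Icc_mem_nhds (hsub hv).1 hv.2)
  have hyc : ContinuousOn y₀ (Icc θ 1) := hy₀c.mono (Icc_subset_Icc_left hθ0.le)
  have hHc : ContinuousOn H (Icc θ 1) := hH.continuousOn.mono (Icc_subset_Icc_left hθ0.le)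
  have hypos := pos_of_hasDerivAt_firstOrder hp hfpos hyc hy₀1 hy
  have hyθ : 0 ≤ y₀ θ := nonneg_of_pos_on_Ioo hθ1 hyc hypos θ (left_mem_Icc.2 hθ1.le)
  by_contra! hle
  have hyθle : y₀ θ ≤ H θ ^ pconj p := by
    have := Real.rpow_le_rpow (z := pconj p) (Real.rpow_nonneg hyθ _) hle
      (by linarith [one_lt_pconj hp])
    rwa [one_div, Real.rpow_inv_rpow hyθ (by linarith [one_lt_pconj hp])] at this
  have hcomp := rpow_one_div_pconj_le hp (fun v hv => (hfpos v hv).le) hyc hypos hy hHc hHd' hle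
  have hint := pconj_mul_integral_le hp hθ1.le (fun v hv => hh0 v (Ioo_subset_Icc_self (hsub hv)))
    hfi hyc hypos hy hHc hHd' fun v hv => hcomp v (Ioo_subset_Icc_self hv)
  have hI : ∫ v in Ioo 0 1, f v = ∫ v in θ..1, f v :=
    setIntegral_Ioo_eq_intervalIntegral_of_eq_zero hθ0.le hθ1.le fun v hv => by
      simp [f, hg0 v ⟨hv.1.le, hv.2⟩]
  have hIpos : 0 < ∫ v in θ..1, f v := intervalIntegral.intervalIntegral_pos_of_pos_on
    ((intervalIntegrable_iff_integrableOn_Icc_of_le hθ1.le).2 hfi) hfpos hθ1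
  rw [hI] at hcond
  linarith [mul_pos (sub_pos.2 (kfun_lt_pconj hp)) hIpos]
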